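/- For every LTL-SN model M with nonempty agent set 𝒜, all formulas φ, ψ, and every position i: M, i ⊨ φUψ if and only if M, i ⊨ EXP_U(φUψ), where EXP_U(φUψ) := ⋁_{0 ≤ n ≤ |𝒜|} uⁿ(φUψ). In particular the reduction axiom φUψ ↔ EXP_U(φUψ) is valid. -/
import Mathlib


open scoped Classical

/-- An LTL-SN model: a finite set of agents `A`, an irreflexive, serial and
symmetric neighborhood function `N`, a threshold `θ ∈ [0,1]` and an initial
behavior set `I`. -/
structure SNModel (A : Type*) [Fintype A] [DecidableEq A] where
  N : A → Finset A
  θ : ℝ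
  I : Finset A
  irrefl : ∀ a, a ∉ N a
  serial : ∀ a, (N a).Nonempty
  symm : ∀ a c, c ∈ N a ↔ a ∈ N c
  θ_nonneg : 0 ≤ θ
  θ_le_one : θ ≤ 1

variable {A : Type*} [Fintype A] [DecidableEq A]

/-- The update `B ∪ {a ∈ 𝒜 : |N(a) ∩ B| / |N(a)| > θ}`. -/
noncomputable def SNModel.upd (M : SNModel A) (B : Finset A) : Finset A :=
  B ∪ Finset.univ.filter (fun a => M.θ < ((M.N a ∩ B).card : ℝ) / ((M.N a).card : ℝ))

/-- The relation `B ≤ B'` of the model. -/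
def SNModel.rel (M : SNModel A) (B B' : Finset A) : Prop := B' = M.upd B

/-- The (unique) path of the model: `b 0 = I` and `b i ≤ b (i+1)`. -/
noncomputable def SNModel.path (M : SNModel A) : ℕ → Finset A
  | 0 => M.I
  | i + 1 => M.upd (M.path i)

/-- Formulas of LTL-SN: `⊤ | N_{ab} | β_a | ¬φ | φ∧φ | Xφ | φUφ`. -/
inductive Formula (A : Type*) : Type _
  | top : Formula A
  | nbr : A → A → Formula A
  | beta : A → Formula A
  | neg : Formula A → Formula A
  | and : Formula A → Formula A → Formula A
  | next : Formula A → Formula A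
  | untl : Formula A → Formula A → Formula A
deriving DecidableEq

/-- Disjunction abbreviation `φ ∨ ψ := ¬(¬φ ∧ ¬ψ)`. -/
def Formula.orF (φ ψ : Formula A) : Formula A := .neg (.and (.neg φ) (.neg ψ))

/-- Implication abbreviation `φ → ψ := ¬(φ ∧ ¬ψ)`. -/
def Formula.impF (φ ψ : Formula A) : Formula A := .neg (.and φ (.neg ψ))

/-- Biimplication abbreviation. -/
def Formula.iffF (φ ψ : Formula A) : Formula A := .and (φ.impF ψ) (ψ.impF φ)

/-- `F φ := ⊤ U φ`. -/
def Formula.ev (φ : Formula A) : Formula A := .untl .top φ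

/-- `G φ := ¬ F ¬ φ`. -/
def Formula.glob (φ : Formula A) : Formula A := .neg (Formula.ev (.neg φ))

/-- Finite disjunction of a list of formulas. -/
def bigOr : List (Formula A) → Formula A
  | [] => .neg .top
  | φ :: l => φ.orF (bigOr l)

/-- Finite conjunction of a list of formulas. -/
def bigAnd : List (Formula A) → Formula A
  | [] => .top
  | φ :: l => .and φ (bigAnd l)

/-- Satisfaction at a position of the unique path of the model. -/
def Sat (M : SNModel A) : ℕ → Formula A → Prop
  | _, Formula.top => True
  | _, Formula.nbr a c => c ∈ M.N a
  | i, Formula.beta a => a ∈ M.path i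
  | i, Formula.neg φ => ¬ Sat M i φ
  | i, Formula.and φ ψ => Sat M i φ ∧ Sat M i ψ
  | i, Formula.next φ => Sat M (i + 1) φ
  | i, Formula.untl φ ψ => ∃ n : ℕ, Sat M (i + n) ψ ∧ ∀ j < n, Sat M (i + j) φ

/-- The until-expansion steps: `u⁰(φUψ) = ψ`, `uⁿ⁺¹(φUψ) = φ ∧ X uⁿ(φUψ)`. -/
def uStep (φ ψ : Formula A) : ℕ → Formula A
  | 0 => ψ
  | n + 1 => .and φ (.next (uStep φ ψ n))

/-- The until expansion `EXP_U(φUψ) = ⋁_{0 ≤ n ≤ |𝒜|} uⁿ(φUψ)`. -/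
def expU (φ ψ : Formula A) : Formula A :=
  bigOr (((List.range (Fintype.card A + 1))).map (uStep φ ψ))

/-- The majority abbreviation
`β_{N(a)>θ} := ⋁_{G ⊆ 𝒩 ⊆ 𝒜, |G|/|𝒩| > θ} (⋀_{c∈𝒩} N_{ac} ∧ ⋀_{c∉𝒩} ¬N_{ac} ∧ ⋀_{c∈G} β_c)`. -/
noncomputable def majorityF (θ : ℝ) (a : A) : Formula A :=
  bigOr ((((Finset.univ : Finset (Finset A × Finset A)).filter
      (fun p => p.1 ⊆ p.2 ∧ θ < (p.1.card : ℝ) / (p.2.card : ℝ))).toList).map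
    (fun p =>
      Formula.and (bigAnd (p.2.toList.map (fun c => Formula.nbr a c)))
        (Formula.and
          (bigAnd (((Finset.univ : Finset A) \ p.2).toList.map
            (fun c => Formula.neg (Formula.nbr a c))))
          (bigAnd (p.1.toList.map (fun c => Formula.beta c))))))

/-- Propositional evaluation: `⊤`, `¬`, `∧` are interpreted, all other formulas
are treated as atoms evaluated by the valuation `v`. -/
def evalProp (v : Formula A → Prop) : Formula A → Prop
  | .top => True
  | .neg φ => ¬ evalProp v φ
  | .and φ ψ => evalProp v φ ∧ evalProp v ψ
  | φ => v φ

/-- A (substitution instance of a) classical propositional tautology. -/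
def Tautology (φ : Formula A) : Prop := ∀ v : Formula A → Prop, evalProp v φ

/-- The LTL-SN proof system. -/
inductive Proof (θ : ℝ) : Formula A → Prop
  | taut {φ : Formula A} : Tautology φ → Proof θ φ
  | netIrrefl (a : A) : Proof θ (.neg (.nbr a a))
  | netSymm (a c : A) : Proof θ ((Formula.nbr a c).iffF (.nbr c a))
  | netSerial (a : A) :
      Proof θ (bigOr (((Finset.univ : Finset A)).toList.map (fun c => Formula.nbr a c)))
  | redN (a c : A) : Proof θ ((Formula.next (.nbr a c)).iffF (.nbr a c))
  | redB (a : A) :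
      Proof θ ((Formula.next (.beta a)).iffF ((Formula.beta a).orF (majorityF θ a)))
  | redU (φ ψ : Formula A) : Proof θ ((Formula.untl φ ψ).iffF (expU φ ψ))
  | a1 (φ ψ : Formula A) :
      Proof θ ((Formula.glob (φ.impF ψ)).impF ((Formula.glob φ).impF (Formula.glob ψ)))
  | a2 (φ : Formula A) : Proof θ ((Formula.neg (.next φ)).iffF (.next (.neg φ)))
  | a3 (φ ψ : Formula A) :
      Proof θ ((Formula.next (φ.impF ψ)).impF ((Formula.next φ).impF (.next ψ)))
  | a4 (φ : Formula A) :
      Proof θ ((Formula.glob (φ.impF (.next φ))).impF (φ.impF (Formula.glob φ)))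
  | a5 (φ ψ : Formula A) :
      Proof θ ((Formula.untl φ ψ).iffF (ψ.orF (.and φ (.next (.untl φ ψ)))))
  | a6 (φ ψ : Formula A) : Proof θ ((Formula.untl φ ψ).impF (Formula.ev ψ))
  | a7 (φ ψ₁ ψ₂ : Formula A) :
      Proof θ ((Formula.untl φ (ψ₁.orF ψ₂)).iffF ((Formula.untl φ ψ₁).orF (.untl φ ψ₂)))
  | a8 (φ ψ : Formula A) :
      Proof θ ((Formula.next (.and φ ψ)).iffF (.and (.next φ) (.next ψ)))
  | mp {φ ψ : Formula A} : Proof θ (φ.impF ψ) → Proof θ φ → Proof θ ψ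
  | necG {φ : Formula A} : Proof θ φ → Proof θ (Formula.glob φ)
  | necX {φ : Formula A} : Proof θ φ → Proof θ (.next φ)

/-- Substitution `[φ/ψ]χ` of `φ` for occurrences of the subformula `ψ` in `χ`. -/
def subst (φ ψ : Formula A) : Formula A → Formula A
  | .neg χ₁ => if Formula.neg χ₁ = ψ then φ else .neg (subst φ ψ χ₁)
  | .and χ₁ χ₂ => if Formula.and χ₁ χ₂ = ψ then φ else .and (subst φ ψ χ₁) (subst φ ψ χ₂)
  | .next χ₁ => if Formula.next χ₁ = ψ then φ else .next (subst φ ψ χ₁)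
  | .untl χ₁ χ₂ => if Formula.untl χ₁ χ₂ = ψ then φ else .untl (subst φ ψ χ₁) (subst φ ψ χ₂)
  | χ => if χ = ψ then φ else χ

/-- The until translation `t_u`; on until formulas
`t_u(φUψ) = t_u(EXP_U(φUψ)) = EXP_U(t_u(φ) U t_u(ψ))` (since `t_u` commutes with
`¬`, `∧` and `X`). -/
def tu : Formula A → Formula A
  | .top => .top
  | .nbr a c => .nbr a c
  | .beta a => .beta a
  | .neg φ => .neg (tu φ)
  | .and φ ψ => .and (tu φ) (tu ψ)
  | .next φ => .next (tu φ)
  | .untl φ ψ => expU (tu φ) (tu ψ)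

/-- A formula contains no occurrence of the until operator. -/
def untilFree : Formula A → Prop
  | .top => True
  | .nbr _ _ => True
  | .beta _ => True
  | .neg φ => untilFree φ
  | .and φ ψ => untilFree φ ∧ untilFree ψ
  | .next φ => untilFree φ
  | .untl _ _ => False

/-- A formula is propositional: no occurrence of `X` nor of `U`. -/
def propositional : Formula A → Prop
  | .top => True
  | .nbr _ _ => True
  | .beta _ => True
  | .neg φ => propositional φ
  | .and φ ψ => propositional φ ∧ propositional ψ
  | .next _ => False
  | .untl _ _ => False

/-- The cost measure `c` (on until-free formulas). -/
def cost : Formula A → ℕ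
  | .top => 1
  | .nbr _ _ => 1
  | .beta _ => 1
  | .neg φ => 1 + cost φ
  | .and φ ψ => 1 + max (cost φ) (cost ψ)
  | .next (.beta _) => 4 + 2 * Fintype.card A ^ 2
  | .next φ => 2 * cost φ
  | .untl φ ψ => 1 + max (cost φ) (cost ψ)

/-- The subformula relation. -/
inductive Subf : Formula A → Formula A → Prop
  | refl (φ : Formula A) : Subf φ φ
  | neg {ψ φ : Formula A} : Subf ψ φ → Subf ψ (.neg φ)
  | andL {ψ φ₁ φ₂ : Formula A} : Subf ψ φ₁ → Subf ψ (.and φ₁ φ₂)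
  | andR {ψ φ₁ φ₂ : Formula A} : Subf ψ φ₂ → Subf ψ (.and φ₁ φ₂)
  | next {ψ φ : Formula A} : Subf ψ φ → Subf ψ (.next φ)
  | untlL {ψ φ₁ φ₂ : Formula A} : Subf ψ φ₁ → Subf ψ (.untl φ₁ φ₂)
  | untlR {ψ φ₁ φ₂ : Formula A} : Subf ψ φ₂ → Subf ψ (.untl φ₁ φ₂)

/-- `pushX θ φ` computes `t(Xφ)` for a propositional (`X`- and `U`-free) formula
`φ`: it replaces each `β_a` by `β_a ∨ β_{N(a)>θ}` and keeps `N_{ac}` unchanged,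
following the reduction equations `t(XN_{ac}) = N_{ac}`, `t(Xβ_a) = t(β_a ∨ β_{N(a)>θ})`,
`t(X(φ∧ψ)) = t(Xφ ∧ Xψ)`, `t(X¬φ) = t(¬Xφ)`. -/
noncomputable def pushX (θ : ℝ) : Formula A → Formula A
  | .top => .top
  | .nbr a c => .nbr a c
  | .beta a => (Formula.beta a).orF (majorityF θ a)
  | .neg φ => .neg (pushX θ φ)
  | .and φ ψ => .and (pushX θ φ) (pushX θ ψ)
  | .next φ => .next (pushX θ φ)
  | .untl φ ψ => .untl (pushX θ φ) (pushX θ ψ)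

/-- The translation `t` of until-free formulas into propositional formulas, given
by `t(N_{ac}) = N_{ac}`, `t(β_a) = β_a`, `t(φ∧ψ) = t(φ)∧t(ψ)`, `t(¬φ) = ¬t(φ)`,
`t(XN_{ac}) = N_{ac}`, `t(Xβ_a) = t(β_a ∨ β_{N(a)>θ})`, `t(X(φ∧ψ)) = t(Xφ ∧ Xψ)`,
`t(X¬φ) = t(¬Xφ)` and `t(XXφ) = t(X t(Xφ))`; all `X` cases are computed by
pushing `X` through the already translated (hence propositional) body. -/
noncomputable def tr (θ : ℝ) : Formula A → Formula A
  | .top => .top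
  | .nbr a c => .nbr a c
  | .beta a => .beta a
  | .neg φ => .neg (tr θ φ)
  | .and φ ψ => .and (tr θ φ) (tr θ ψ)
  | .next φ => pushX θ (tr θ φ)
  | .untl φ ψ => .untl (tr θ φ) (tr θ ψ)

lemma aux_path_succ_subset (M : SNModel A) (n : ℕ) : M.path n ⊆ M.path (n + 1) :=
  Finset.subset_union_left

lemma aux_sat_bigOr (M : SNModel A) (i : ℕ) (l : List (Formula A)) :
    Sat M i (bigOr l) ↔ ∃ χ ∈ l, Sat M i χ := by
  induction l with
  | nil => simp [bigOr, Sat]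
  | cons φ l ih =>
    simp only [bigOr, Formula.orF, Sat, ih, List.mem_cons]
    constructor
    · intro h
      by_cases hφ : Sat M i φ
      · exact ⟨φ, Or.inl rfl, hφ⟩
      · rcases not_and_or.mp h with h1 | h1
        · exact absurd (not_not.mp h1) hφ
        · obtain ⟨χ, hχ, hs⟩ := not_not.mp h1
          exact ⟨χ, Or.inr hχ, hs⟩
    · rintro ⟨χ, hχ | hχ, hs⟩
      · subst hχ; tauto
      · intro h; exact h.2 ⟨χ, hχ, hs⟩

lemma aux_path_stab (M : SNModel A) {k : ℕ} (h : M.path k = M.path (k + 1)) :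
    ∀ m, M.path (k + m) = M.path k := by
  intro m
  induction m with
  | zero => rfl
  | succ m ih =>
    have h1 : M.path (k + (m + 1)) = M.upd (M.path (k + m)) := rfl
    have h2 : M.path (k + 1) = M.upd (M.path k) := rfl
    rw [h1, ih, ← h2, ← h]

lemma aux_sat_congr (M : SNModel A) (χ : Formula A) :
    ∀ j j', (∀ m, M.path (j + m) = M.path (j' + m)) → (Sat M j χ ↔ Sat M j' χ) := by
  induction χ with
  | top => intro j j' h; simp [Sat]
  | nbr a c => intro j j' h; simp [Sat]
  | beta a =>
    intro j j' h
    have h0 : M.path j = M.path j' := by simpa using h 0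
    simp [Sat, h0]
  | neg φ ih => intro j j' h; simp [Sat, ih j j' h]
  | and φ ψ ih1 ih2 => intro j j' h; simp [Sat, ih1 j j' h, ih2 j j' h]
  | next φ ih =>
    intro j j' h
    simp only [Sat]
    exact ih (j + 1) (j' + 1) (fun m => by
      rw [Nat.add_assoc, Nat.add_assoc]; exact h (1 + m))
  | untl φ ψ ih1 ih2 =>
    intro j j' h
    simp only [Sat]
    apply exists_congr; intro n
    have hn : ∀ m, M.path (j + n + m) = M.path (j' + n + m) := fun m => by
      rw [Nat.add_assoc, Nat.add_assoc]; exact h (n + m)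
    rw [ih2 (j + n) (j' + n) hn]
    apply and_congr_right'
    apply forall_congr'; intro m
    apply imp_congr_right; intro hm
    exact ih1 (j + m) (j' + m) (fun t => by
      rw [Nat.add_assoc, Nat.add_assoc]; exact h (m + t))

lemma aux_sat_uStep (M : SNModel A) (φ ψ : Formula A) :
    ∀ n i, Sat M i (uStep φ ψ n) ↔ (Sat M (i + n) ψ ∧ ∀ j < n, Sat M (i + j) φ) := by
  intro n
  induction n with
  | zero => intro i; simp [uStep, Sat]
  | succ n ih =>
    intro i
    simp only [uStep, Sat, ih (i + 1)]
    constructor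
    · rintro ⟨hφ, hψ, hall⟩
      refine ⟨by rw [show i + (n + 1) = i + 1 + n by omega]; exact hψ, ?_⟩
      intro j hj
      rcases Nat.eq_zero_or_pos j with hj0 | hj0
      · subst hj0; simpa using hφ
      · have := hall (j - 1) (by omega)
        rwa [show i + 1 + (j - 1) = i + j by omega] at this
    · rintro ⟨hψ, hall⟩
      refine ⟨by simpa using hall 0 (by omega), ?_, ?_⟩
      · rw [show i + 1 + n = i + (n + 1) by omega]; exact hψ
      · intro j hj
        have := hall (j + 1) (by omega)
        rwa [show i + (j + 1) = i + 1 + j by omega] at this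

lemma aux_exists_stab (M : SNModel A) (i : ℕ) :
    ∃ k ≤ Fintype.card A, M.path (i + k) = M.path (i + k + 1) := by
  by_contra h
  push_neg at h
  have hs : ∀ k ≤ Fintype.card A, M.path (i + k) ⊂ M.path (i + k + 1) :=
    fun k hk => (aux_path_succ_subset M (i + k)).ssubset_of_ne (h k hk)
  have hc : ∀ k ≤ Fintype.card A + 1, k ≤ (M.path (i + k)).card := by
    intro k hk
    induction k with
    | zero => exact Nat.zero_le _
    | succ k ih =>
      have h1 := ih (by omega)
      have h2 := Finset.card_lt_card (hs k (by omega))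
      have h3 : M.path (i + (k + 1)) = M.path (i + k + 1) := by rw [← Nat.add_assoc]
      rw [h3]
      omega
  have h4 := hc (Fintype.card A + 1) le_rfl
  have h5 := Finset.card_le_univ (M.path (i + (Fintype.card A + 1)))
  omega

/-- the until expansion is semantically equivalent to the until
operator, i.e. the reduction axiom `φUψ ↔ EXP_U(φUψ)` is valid. -/
theorem until_expansion_sound [Nonempty A] (M : SNModel A) (φ ψ : Formula A) (i : ℕ) :
    Sat M i (Formula.untl φ ψ) ↔ Sat M i (expU φ ψ) := by
  have hexp : Sat M i (expU φ ψ) ↔ ∃ n ≤ Fintype.card A, Sat M i (uStep φ ψ n) := by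
    rw [expU, aux_sat_bigOr]
    constructor
    · rintro ⟨χ, hχ, hs⟩
      simp only [List.mem_map, List.mem_range, Nat.lt_succ_iff] at hχ
      obtain ⟨n, hn, rfl⟩ := hχ
      exact ⟨n, hn, hs⟩
    · rintro ⟨n, hn, hs⟩
      exact ⟨uStep φ ψ n, by simp [List.mem_map, Nat.lt_succ_iff]; exact ⟨n, hn, rfl⟩, hs⟩
  rw [hexp]
  simp only [Sat, aux_sat_uStep]
  constructor
  · rintro ⟨n, hψ, hφ⟩
    by_cases hn : n ≤ Fintype.card A
    · exact ⟨n, hn, hψ, fun j hj => hφ j hj⟩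
    · push_neg at hn
      obtain ⟨k, hk, hstab⟩ := aux_exists_stab M i
      have hconst : ∀ j, i + k ≤ j → M.path j = M.path (i + k) := by
        intro j hj
        have := aux_path_stab M hstab (j - (i + k))
        rwa [Nat.add_sub_cancel' hj] at this
      have h' : ∀ m, M.path (i + Fintype.card A + m) = M.path (i + n + m) := fun m => by
        rw [hconst (i + Fintype.card A + m) (by omega), hconst (i + n + m) (by omega)]
      refine ⟨Fintype.card A, le_rfl, ?_, ?_⟩
      · exact (aux_sat_congr M ψ (i + Fintype.card A) (i + n) h').mpr hψ
      · intro j hj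
        exact hφ j (by omega)
  · rintro ⟨n, _, hψ, hφ⟩
    exact ⟨n, hψ, hφ⟩
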